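/- If the family of populations of a PMA is laminar (every two populations are either disjoint or one contains the other) and all constraints are maximum quotas (no minimum targets), then the greedy choice function is substitutable: for every candidate set C and every c in C, Ch(C) \ {c} is a subset of Ch(C \ {c}). -/

import Mathlib

/-! Shared definitions: PMA choice functions (greedy max-quota, Algorithm 1, Algorithm 2),
laminarity, deferred acceptance, and stability notions. -/

namespace PMA

variable {α : Type*} [DecidableEq α]

/-- A population constraint: a set of candidates together with a bound
(a maximum quota or a minimum target, depending on context). -/
abbrev Pop (α : Type*) := Finset α × ℕ

/-- A set `S` respects all maximum quotas. -/
def Feasible (maxQ : List (Pop α)) (S : Finset α) : Prop :=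
  ∀ q ∈ maxQ, (S ∩ q.1).card ≤ q.2

instance (maxQ : List (Pop α)) (S : Finset α) : Decidable (Feasible maxQ S) :=
  List.decidableBAll _ _

/-- Greedy pass: traverse candidates in the given order, accepting each candidate
whose addition violates no maximum quota. -/
def pass2 (maxQ : List (Pop α)) : List α → Finset α → Finset α
  | [], S => S
  | c :: rest, S =>
      if Feasible maxQ (insert c S) then pass2 maxQ rest (insert c S)
      else pass2 maxQ rest S

/-- Candidate `c` belongs to some population whose minimum target is not yet met by `S`. -/
def HelpsMin (minT : List (Pop α)) (S : Finset α) (c : α) : Prop :=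
  ∃ p ∈ minT, c ∈ p.1 ∧ (S ∩ p.1).card < p.2

instance (minT : List (Pop α)) (S : Finset α) (c : α) : Decidable (HelpsMin minT S c) :=
  List.decidableBEx _ _

/-- First pass of Algorithm 1: traverse candidates in order, accepting (subject to
maximum quotas) those who help meet some unmet minimum target. -/
def pass1 (maxQ minT : List (Pop α)) : List α → Finset α → Finset α
  | [], S => S
  | c :: rest, S =>
      if HelpsMin minT S c ∧ Feasible maxQ (insert c S) then
        pass1 maxQ minT rest (insert c S)
      else pass1 maxQ minT rest S

/-- Algorithm 1 choice function: two passes over the candidates of `C`,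
in the priority order given by the list `order`. -/
def choice1 (maxQ minT : List (Pop α)) (order : List α) (C : Finset α) : Finset α :=
  pass2 maxQ (order.filter fun c => decide (c ∈ C))
    (pass1 maxQ minT (order.filter fun c => decide (c ∈ C)) ∅)

/-- The greedy max-quota choice function (no minimum targets), with the priority order
given by the linear order on candidates. -/
def greedy [LinearOrder α] (maxQ : List (Pop α)) (C : Finset α) : Finset α :=
  pass2 maxQ (C.sort (· ≤ ·)) ∅

/-- The greedy max-quota choice function with an explicit priority list. -/
def greedyL (maxQ : List (Pop α)) (order : List α) (C : Finset α) : Finset α :=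
  pass2 maxQ (order.filter fun c => decide (c ∈ C)) ∅

/-- The number of populations with a minimum target not yet met by `S` to which `c` belongs. -/
def nUnmet (minT : List (Pop α)) (S : Finset α) (c : α) : ℕ :=
  (minT.filter fun p => decide (c ∈ p.1 ∧ (S ∩ p.1).card < p.2)).length

/-- The candidates of `R` maximizing the number of unmet minimum targets they help. -/
def bestSet [LinearOrder α] (minT : List (Pop α)) (S R : Finset α) : Finset α :=
  R.filter fun c => ∀ d ∈ R, nUnmet minT S d ≤ nUnmet minT S c

lemma bestSet_nonempty [LinearOrder α] (minT : List (Pop α)) (S : Finset α) {R : Finset α}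
    (hR : R.Nonempty) : (bestSet minT S R).Nonempty := by
  obtain ⟨b, hb, hmax⟩ := R.exists_max_image (nUnmet minT S) hR
  exact ⟨b, Finset.mem_filter.mpr ⟨hb, hmax⟩⟩

/-- The next candidate processed by Algorithm 2: among `R`, maximize the number of unmet
minimum targets helped, breaking ties by the priority order. -/
def pick [LinearOrder α] (minT : List (Pop α)) (S : Finset α) {R : Finset α}
    (hR : R.Nonempty) : α :=
  (bestSet minT S R).min' (bestSet_nonempty minT S hR)

lemma pick_mem [LinearOrder α] (minT : List (Pop α)) (S : Finset α) {R : Finset α}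
    (hR : R.Nonempty) : pick minT S hR ∈ R :=
  Finset.filter_subset _ _ (Finset.min'_mem _ _)

/-- Main loop of Algorithm 2: `R` is the set of unprocessed candidates, `S` the chosen set. -/
def choice2Go [LinearOrder α] (maxQ minT : List (Pop α)) (R S : Finset α) : Finset α :=
  if hR : R.Nonempty then
    choice2Go maxQ minT (R.erase (pick minT S hR))
      (if Feasible maxQ (insert (pick minT S hR) S) then insert (pick minT S hR) S else S)
  else S
  termination_by R.card
  decreasing_by exact Finset.card_erase_lt_of_mem (pick_mem minT S hR)

/-- Algorithm 2 choice function. -/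
def choice2 [LinearOrder α] (maxQ minT : List (Pop α)) (C : Finset α) : Finset α :=
  choice2Go maxQ minT C ∅

/-- A family of populations is laminar: any two are disjoint or nested. -/
def Laminar (pops : List (Pop α)) : Prop :=
  ∀ p ∈ pops, ∀ q ∈ pops, Disjoint p.1 q.1 ∨ p.1 ⊆ q.1 ∨ q.1 ⊆ p.1

/-- The sets of the populations carrying a positive minimum target. -/
def minTargetSets (minT : List (Pop α)) : Set (Finset α) :=
  {P | ∃ t, (P, t) ∈ minT ∧ 0 < t}

/-- A family of sets is a union of pairwise-disjoint chains: it can be partitioned into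
subfamilies, each totally ordered by inclusion, with sets in different subfamilies disjoint. -/
def UnionOfDisjointChains (F : Set (Finset α)) : Prop :=
  ∃ Part : Set (Set (Finset α)), ⋃₀ Part = F ∧ (∀ c ∈ Part, IsChain (· ⊆ ·) c) ∧
    Part.Pairwise fun c c' => ∀ P ∈ c, ∀ Q ∈ c', Disjoint P Q

section DA

variable {β : Type*} [Fintype α] [DecidableEq β]

/-- The institution to which candidate `c` currently applies: the most-preferred institution
on her list that has not yet rejected her (`none` if her list is exhausted). -/
def applyTo (prefs : α → List β) (rej : α → Finset β) (c : α) : Option β :=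
  (prefs c).find? fun m => decide (m ∉ rej c)

/-- The set of candidates currently applying to institution `m`. -/
def applicants (prefs : α → List β) (rej : α → Finset β) (m : β) : Finset α :=
  Finset.univ.filter fun c => applyTo prefs rej c = some m

/-- One round of candidate-proposing deferred acceptance: each candidate applies to her
most-preferred not-yet-rejecting institution; each institution keeps its choice from its
applicants and rejects the rest. `rej c` is the set of institutions that have rejected `c`. -/
def daRound (Ch : β → Finset α → Finset α) (prefs : α → List β) (rej : α → Finset β) :
    α → Finset β := fun c =>
  match applyTo prefs rej c with
  | none => rej c
  | some m => if c ∈ Ch m (applicants prefs rej m) then rej c else insert m (rej c)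

variable [Fintype β]

/-- The rejection sets at the end of candidate-proposing deferred acceptance (running enough
rounds to guarantee that a fixed point, i.e. a round with no rejections, has been reached). -/
def daRej (Ch : β → Finset α → Finset α) (prefs : α → List β) : α → Finset β :=
  (daRound Ch prefs)^[Fintype.card α * Fintype.card β + 1] fun _ => ∅

/-- The matching produced by candidate-proposing deferred acceptance. -/
def daMatch (Ch : β → Finset α → Finset α) (prefs : α → List β) : α → Option β :=
  applyTo prefs (daRej Ch prefs)

end DA

section Stability

variable {β : Type*} [DecidableEq β]

/-- Candidate `c` strictly prefers institution `m` to the assignment `o`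
(being unmatched, `none`, is worse than any institution on her list). -/
def Prefers (prefs : α → List β) (c : α) (m : β) : Option β → Prop
  | none => m ∈ prefs c
  | some m' => m ∈ prefs c ∧ (prefs c).idxOf m < (prefs c).idxOf m'

/-- Candidate `c` weakly prefers assignment `o` to assignment `o'`. -/
def WeaklyPrefers (prefs : α → List β) (c : α) (o o' : Option β) : Prop :=
  o = o' ∨ ∃ m, o = some m ∧ Prefers prefs c m o'

variable [Fintype α]

/-- The set of candidates assigned to institution `m` by the matching `M`. -/
def assignedTo (M : α → Option β) (m : β) : Finset α :=
  Finset.univ.filter fun c => M c = some m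

/-- Individual rationality: candidates are matched only to listed institutions, and each
institution chooses all candidates assigned to it. -/
def IndivRational (Ch : β → Finset α → Finset α) (prefs : α → List β) (M : α → Option β) :
    Prop :=
  (∀ c m, M c = some m → m ∈ prefs c) ∧ ∀ m, Ch m (assignedTo M m) = assignedTo M m

/-- `(c, m)` is a blocking pair for the matching `M`. -/
def Blocks (Ch : β → Finset α → Finset α) (prefs : α → List β) (M : α → Option β)
    (c : α) (m : β) : Prop :=
  Prefers prefs c m (M c) ∧ c ∈ Ch m (insert c (assignedTo M m))

/-- Stability: individual rationality plus no blocking pairs. -/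
def StableMatching (Ch : β → Finset α → Finset α) (prefs : α → List β) (M : α → Option β) :
    Prop :=
  IndivRational Ch prefs M ∧ ∀ c m, ¬ Blocks Ch prefs M c m

/-- One step of the candidate-Pareto-improvement stage: a blocking pair `(m, c)` such that
`c` can be added to `m` without rejecting anyone is resolved by assigning `c` to `m`. -/
def ParetoStep [DecidableEq α] (Ch : β → Finset α → Finset α) (prefs : α → List β)
    (M M' : α → Option β) : Prop :=
  ∃ m c, Prefers prefs c m (M c) ∧
    Ch m (insert c (assignedTo M m)) = insert c (assignedTo M m) ∧
    M' = Function.update M c (some m)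

end Stability

end PMA


open PMA

/-! The sets respecting a laminar family of maximum quotas are the independent sets of a matroid:
if `I` cannot be augmented from a larger feasible `J`, every element of `J \ I` lies in a population
saturated by `I`, and counting inside the (disjoint) inclusion-maximal saturated populations gives
`#J ≤ #I`. Greedy then accepts `x` exactly when `x` lies outside the closure of the candidates of
higher priority. Removing `c` only shrinks that set, and closure is monotone. -/

theorem Finset.card_le_card_of_forall_card_inter_le {α : Type*} [DecidableEq α]
    {I J : Finset α} {D : Finset (Finset α)} (hD : (D : Set (Finset α)).PairwiseDisjoint id)
    (hle : ∀ P ∈ D, (J ∩ P).card ≤ (I ∩ P).card) (hcover : J \ I ⊆ D.biUnion id) :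
    J.card ≤ I.card := by
  set U := D.biUnion id
  have hinter (K : Finset α) : (K ∩ U).card = ∑ P ∈ D, (K ∩ P).card := by
    rw [Finset.inter_biUnion,
      Finset.card_biUnion (hD.mono_on fun P _ => Finset.inter_subset_right)]
    rfl
  have hsdiff : J \ U ⊆ I \ U := fun y hy => by
    rw [Finset.mem_sdiff] at hy ⊢
    exact ⟨by_contra fun hyI => hy.2 (hcover (Finset.mem_sdiff.2 ⟨hy.1, hyI⟩)), hy.2⟩
  calc J.card = (J ∩ U).card + (J \ U).card := (Finset.card_inter_add_card_sdiff J U).symm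
    _ ≤ (I ∩ U).card + (I \ U).card := by
      rw [hinter, hinter]
      exact add_le_add (Finset.sum_le_sum hle) (Finset.card_le_card hsdiff)
    _ = I.card := Finset.card_inter_add_card_sdiff I U

theorem Finset.sort_eq_sort_filter_lt_append {α : Type*} [LinearOrder α] {C : Finset α} {x : α}
    (hx : x ∈ C) :
    C.sort (· ≤ ·) =
      (C.filter (· < x)).sort (· ≤ ·) ++ x :: (C.filter (x < ·)).sort (· ≤ ·) := by
  have hsorted : ((C.filter (· < x)).sort (· ≤ ·) ++
      x :: (C.filter (x < ·)).sort (· ≤ ·)).Pairwise (· < ·) := by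
    simp only [List.pairwise_append, List.pairwise_cons, Finset.mem_sort, Finset.mem_filter,
      List.mem_cons]
    refine ⟨(Finset.sortedLT_sort _).pairwise, ⟨fun _ hb => hb.2,
      (Finset.sortedLT_sort _).pairwise⟩, ?_⟩
    rintro a ⟨-, hax⟩ b (rfl | ⟨-, hxb⟩)
    exacts [hax, hax.trans hxb]
  refine List.Perm.eq_of_sortedLE (Finset.sortedLT_sort C).sortedLE
    hsorted.sortedLT.sortedLE ?_
  refine (List.perm_ext_iff_of_nodup (Finset.sort_nodup _ _) hsorted.nodup).2 fun a => ?_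
  simp only [Finset.mem_sort, List.mem_append, List.mem_cons, Finset.mem_filter]
  grind

namespace PMA

variable {α : Type*} {maxQ : List (Pop α)}

theorem Laminar.eq_or_disjoint_of_maximal (hlam : Laminar maxQ) {T : Finset (Finset α)}
    (hT : ∀ P ∈ T, ∃ q, (P, q) ∈ maxQ) {P Q : Finset α} (hP : Maximal (· ∈ T) P)
    (hQ : Maximal (· ∈ T) Q) : P = Q ∨ Disjoint P Q := by
  obtain ⟨p, hp⟩ := hT P hP.prop
  obtain ⟨q, hq⟩ := hT Q hQ.prop
  rcases hlam _ hp _ hq with hdisj | hPQ | hQP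
  · exact .inr hdisj
  · exact .inl (hPQ.antisymm (hP.2 hQ.prop hPQ))
  · exact .inl ((hQ.2 hP.prop hQP).antisymm hQP)

variable [DecidableEq α]

variable (maxQ) in
theorem feasible_empty : Feasible maxQ ∅ := by
  simp [Feasible]

theorem Feasible.mono {S T : Finset α} (hT : Feasible maxQ T) (hST : S ⊆ T) :
    Feasible maxQ S := fun q hq =>
  (Finset.card_le_card (Finset.inter_subset_inter_right hST)).trans (hT q hq)

theorem exists_saturated_of_not_feasible_insert {I : Finset α} {x : α} (hI : Feasible maxQ I)
    (hxI : ¬ Feasible maxQ (insert x I)) : ∃ p ∈ maxQ, x ∈ p.1 ∧ (I ∩ p.1).card = p.2 := by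
  simp only [Feasible, not_forall, not_le] at hxI
  obtain ⟨p, hp, hlt⟩ := hxI
  have hxp : x ∈ p.1 := by
    by_contra hxp
    rw [Finset.insert_inter_of_notMem hxp] at hlt
    exact (hI p hp).not_gt hlt
  rw [Finset.insert_inter_of_mem hxp] at hlt
  exact ⟨p, hp, hxp, (hI p hp).antisymm (by grind [Finset.card_insert_le])⟩

theorem Laminar.exists_insert_feasible (hlam : Laminar maxQ) {I J : Finset α}
    (hI : Feasible maxQ I) (hJ : Feasible maxQ J) (hIJ : I.card < J.card) :
    ∃ x ∈ J, x ∉ I ∧ Feasible maxQ (insert x I) := by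
  classical
  by_contra! hstuck
  set T := (maxQ.toFinset.filter fun p => (I ∩ p.1).card = p.2).image Prod.fst
  have hmemT {P : Finset α} : P ∈ T ↔ (P, (I ∩ P).card) ∈ maxQ := by
    simp [T]
  have hTpop : ∀ P ∈ T, ∃ q, (P, q) ∈ maxQ := fun _ hP => ⟨_, hmemT.1 hP⟩
  refine hIJ.not_ge (Finset.card_le_card_of_forall_card_inter_le
    (D := T.filter (Maximal (· ∈ T))) ?_ ?_ ?_)
  · intro P hP Q hQ hPQ
    rw [Finset.mem_coe, Finset.mem_filter] at hP hQ
    exact (hlam.eq_or_disjoint_of_maximal hTpop hP.2 hQ.2).resolve_left hPQ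
  · intro P hP
    exact hJ _ (hmemT.1 (Finset.mem_filter.1 hP).1)
  · intro x hx
    obtain ⟨hxJ, hxI⟩ := Finset.mem_sdiff.1 hx
    obtain ⟨p, hp, hxp, hpI⟩ := exists_saturated_of_not_feasible_insert hI (hstuck x hxJ hxI)
    obtain ⟨P, hpP, hP⟩ := T.exists_le_maximal (hmemT.2 (by rwa [hpI]))
    exact Finset.mem_biUnion.2 ⟨P, Finset.mem_filter.2 ⟨hP.prop, hP⟩, hpP hxp⟩

def laminarMatroid (maxQ : List (Pop α)) (hlam : Laminar maxQ) : Matroid α :=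
  (IndepMatroid.ofFinset Set.univ (Feasible maxQ) (feasible_empty maxQ)
    (fun _ _ hJ hIJ => hJ.mono hIJ) (fun _ _ => hlam.exists_insert_feasible)
    (fun _ _ => Set.subset_univ _)).matroid

theorem laminarMatroid_indep_coe (hlam : Laminar maxQ) {I : Finset α} :
    (laminarMatroid maxQ hlam).Indep I ↔ Feasible maxQ I := by
  simp [laminarMatroid]

section Pass

variable (maxQ)

theorem pass2_append (L₁ L₂ : List α) (S : Finset α) :
    pass2 maxQ (L₁ ++ L₂) S = pass2 maxQ L₂ (pass2 maxQ L₁ S) := by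
  induction L₁ generalizing S with
  | nil => rfl
  | cons a l ih =>
    simp only [List.cons_append, pass2]
    split <;> apply ih

theorem subset_pass2 (L : List α) (S : Finset α) : S ⊆ pass2 maxQ L S := by
  induction L generalizing S with
  | nil => exact subset_rfl
  | cons a l ih =>
    simp only [pass2]
    split
    · exact (Finset.subset_insert a S).trans (ih _)
    · exact ih _

theorem pass2_subset (L : List α) (S : Finset α) : pass2 maxQ L S ⊆ S ∪ L.toFinset := by
  induction L generalizing S with
  | nil => simp [pass2]
  | cons a l ih =>
    simp only [pass2]
    split <;> refine (ih _).trans fun y => ?_ <;>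
      simp only [Finset.mem_union, Finset.mem_insert, List.mem_toFinset, List.mem_cons] <;> tauto

end Pass

theorem Feasible.pass2 {S : Finset α} (hS : Feasible maxQ S) (L : List α) :
    Feasible maxQ (pass2 maxQ L S) := by
  induction L generalizing S with
  | nil => exact hS
  | cons a l ih =>
    simp only [PMA.pass2]
    split
    · exact ih ‹_›
    · exact ih hS

theorem not_feasible_insert_pass2 {L : List α} {S : Finset α} {x : α} (hxL : x ∈ L)
    (hx : x ∉ pass2 maxQ L S) : ¬ Feasible maxQ (insert x (pass2 maxQ L S)) := by
  induction L generalizing S with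
  | nil => simp at hxL
  | cons a l ih =>
    simp only [pass2] at hx ⊢
    split_ifs at hx ⊢ with ha
    · rcases List.mem_cons.1 hxL with rfl | hxl
      · exact absurd (subset_pass2 maxQ l _ (Finset.mem_insert_self x S)) hx
      · exact ih hxl hx
    · rcases List.mem_cons.1 hxL with rfl | hxl
      · exact fun h => ha (h.mono (Finset.insert_subset_insert _ (subset_pass2 maxQ l S)))
      · exact ih hxl hx

theorem mem_pass2_cons_iff {L : List α} {S : Finset α} {x : α} (hxS : x ∉ S) (hxL : x ∉ L) :
    x ∈ pass2 maxQ (x :: L) S ↔ Feasible maxQ (insert x S) := by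
  simp only [pass2]
  split
  · exact iff_of_true (subset_pass2 maxQ L _ (Finset.mem_insert_self x S)) ‹_›
  · refine iff_of_false (fun hx => ?_) ‹_›
    simpa [hxS, hxL] using pass2_subset maxQ L S hx

variable [LinearOrder α]

variable (maxQ) in
theorem greedy_subset (C : Finset α) : greedy maxQ C ⊆ C := by
  simpa [greedy] using pass2_subset maxQ (C.sort (· ≤ ·)) ∅

theorem greedy_isBasis (hlam : Laminar maxQ) (C : Finset α) :
    (laminarMatroid maxQ hlam).IsBasis (greedy maxQ C) C := by
  refine Matroid.Indep.isBasis_of_forall_insert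
    ((laminarMatroid_indep_coe hlam).2 ((feasible_empty maxQ).pass2 _))
    (Finset.coe_subset.2 (greedy_subset maxQ C)) fun y hy => ?_
  rw [Matroid.dep_iff, ← Finset.coe_insert, laminarMatroid_indep_coe]
  exact ⟨not_feasible_insert_pass2 ((Finset.mem_sort _).2 hy.1) hy.2, Set.subset_univ _⟩

theorem mem_greedy_iff_notMem_closure (hlam : Laminar maxQ) {C : Finset α} {x : α}
    (hx : x ∈ C) :
    x ∈ greedy maxQ C ↔ x ∉ (laminarMatroid maxQ hlam).closure (C.filter (· < x)) := by
  have hxG : x ∉ greedy maxQ (C.filter (· < x)) := fun h => lt_irrefl x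
    (Finset.mem_filter.1 (greedy_subset maxQ _ h)).2
  have hxL : x ∉ (C.filter (x < ·)).sort (· ≤ ·) := by simp
  rw [← (greedy_isBasis hlam _).closure_eq_closure,
    (greedy_isBasis hlam _).indep.notMem_closure_iff_of_notMem (Finset.mem_coe.not.2 hxG)
      (Set.mem_univ x),
    ← Finset.coe_insert, laminarMatroid_indep_coe, ← mem_pass2_cons_iff hxG hxL, greedy,
    Finset.sort_eq_sort_filter_lt_append hx, pass2_append]
  rfl

end PMA

theorem greedy_substitutable_general {α : Type*} [DecidableEq α] [LinearOrder α]
    (maxQ : List (Pop α)) (hlam : Laminar maxQ)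
    (C : Finset α) (c : α) :
    (greedy maxQ C).erase c ⊆ greedy maxQ (C.erase c) := by
  intro x hx
  obtain ⟨hxc, hxG⟩ := Finset.mem_erase.1 hx
  have hxC := greedy_subset maxQ C hxG
  rw [mem_greedy_iff_notMem_closure hlam hxC] at hxG
  rw [mem_greedy_iff_notMem_closure hlam (Finset.mem_erase.2 ⟨hxc, hxC⟩)]
  exact fun hspan => hxG ((laminarMatroid maxQ hlam).closure_mono
    (Finset.coe_subset.2 (Finset.filter_subset_filter _ (Finset.erase_subset c C))) hspan)

/-- For laminar populations with maximum quotas only, the greedy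
choice function is substitutable: `Ch(C) \ {c} ⊆ Ch(C \ {c})` for every `c ∈ C`. -/
theorem greedy_substitutable {α : Type*} [DecidableEq α] [LinearOrder α]
    (maxQ : List (Pop α)) (hlam : Laminar maxQ)
    (C : Finset α) (c : α) (hc : c ∈ C) :
    (greedy maxQ C).erase c ⊆ greedy maxQ (C.erase c) :=
  greedy_substitutable_general maxQ hlam C c
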